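/- arXiv:1909.08447 — 2 statements merged into one kernel-verified Lean document; each statement's English description precedes it below -/
import Mathlib

section
/- Let A and B be I×J matrices with A column-stochastic, B row-stochastic, and suppose η is a probability vector with strictly positive entries such that D η = 0, where D_{(i,j),s} = a_{ij} b_{sj} − δ_{is} b_{ij}. Then the matrix P with p_{ij} = b_{ij} η_i satisfies a_{ij} = p_{ij} / (Σ_s p_{sj}) for every (i,j) with Σ_s p_{sj} > 0. -/
open Finset

theorem Matrix.mulVec_apply_of_eq_mul_sub_ite {ι κ R : Type*} [Fintype ι] [DecidableEq ι]
    [CommRing R] {A B : Matrix ι κ R} {D : Matrix (ι × κ) ι R}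
    (hD : ∀ i j s, D (i, j) s = A i j * B s j - (if i = s then B i j else 0))
    (η : ι → R) (i : ι) (j : κ) :
    D.mulVec η (i, j) = A i j * ∑ s, B s j * η s - B i j * η i := by
  simp only [Matrix.mulVec, dotProduct, hD, sub_mul, sum_sub_distrib, ite_mul, zero_mul,
    sum_ite_eq, mem_univ, if_true, mul_sum, mul_assoc]

theorem conditional_recovered_from_kernel_general
    (I J : ℕ) (A B : Matrix (Fin I) (Fin J) ℝ)
    (η : Fin I → ℝ)
    (D : Matrix (Fin I × Fin J) (Fin I) ℝ)
    (hD : ∀ i j s, D (i, j) s = A i j * B s j - (if i = s then B i j else 0))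
    (hker : D.mulVec η = 0)
    (P : Matrix (Fin I) (Fin J) ℝ) (hP : ∀ i j, P i j = B i j * η i) :
    ∀ i j, 0 < (∑ s, P s j) → A i j = P i j / ∑ s, P s j := by
  intro i j hpos
  have hrow := congrFun hker (i, j)
  rw [Matrix.mulVec_apply_of_eq_mul_sub_ite hD, Pi.zero_apply, sub_eq_zero] at hrow
  simp only [hP]
  exact eq_div_of_mul_eq (by simpa only [hP] using hpos.ne') hrow

theorem conditional_recovered_from_kernel
    (I J : ℕ) (A B : Matrix (Fin I) (Fin J) ℝ)
    (hA0 : ∀ i j, 0 ≤ A i j) (hAcol : ∀ j, ∑ i, A i j = 1)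
    (hB0 : ∀ i j, 0 ≤ B i j) (hBrow : ∀ i, ∑ j, B i j = 1)
    (η : Fin I → ℝ) (hη0 : ∀ i, 0 < η i) (hη1 : ∑ i, η i = 1)
    (D : Matrix (Fin I × Fin J) (Fin I) ℝ)
    (hD : ∀ i j s, D (i, j) s = A i j * B s j - (if i = s then B i j else 0))
    (hker : D.mulVec η = 0)
    (P : Matrix (Fin I) (Fin J) ℝ) (hP : ∀ i j, P i j = B i j * η i) :
    ∀ i j, 0 < (∑ s, P s j) → A i j = P i j / ∑ s, P s j :=
  conditional_recovered_from_kernel_general I J A B η D hD hker P hP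
end

section
/- Suppose A and B are compatible I×J conditional probability matrices via joint distribution P with all row sums p_{i·} > 0 and column sums p_{·j} > 0. Then the cross-product-ratio equality holds: for all i, i', j, j', a_{ij} a_{i'j'} b_{i'j} b_{ij'} = a_{i'j} a_{ij'} b_{ij} b_{i'j'}. -/
theorem cross_product_ratio_equality_general
    (I J : ℕ) (A B P : Matrix (Fin I) (Fin J) ℝ)
    (ha : ∀ i j, A i j = P i j / ∑ s, P s j)
    (hb : ∀ i j, B i j = P i j / ∑ k, P i k) :
    ∀ i i' j j', A i j * A i' j' * B i' j * B i j' =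
      A i' j * A i j' * B i j * B i' j' := by
  intro i i' j j'
  simp only [ha, hb]
  ring

theorem cross_product_ratio_equality
    (I J : ℕ) (A B P : Matrix (Fin I) (Fin J) ℝ)
    (hP0 : ∀ i j, 0 ≤ P i j) (hPsum : ∑ i, ∑ j, P i j = 1)
    (hrow : ∀ i, 0 < ∑ k, P i k) (hcol : ∀ j, 0 < ∑ s, P s j)
    (ha : ∀ i j, A i j = P i j / ∑ s, P s j)
    (hb : ∀ i j, B i j = P i j / ∑ k, P i k) :
    ∀ i i' j j', A i j * A i' j' * B i' j * B i j' =
      A i' j * A i j' * B i j * B i' j' :=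
  cross_product_ratio_equality_general I J A B P ha hb
end
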